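/- Let R be a commutative ring, r ≤ min(m,n), and suppose A ∈ R^{m×n} is written as A = U · I_{r,m,n} · V with U ∈ GL_m(R) and V ∈ GL_n(R). Then a matrix B ∈ R^{n×m} satisfies A·B·A = A and B·A·B = B if and only if there exist matrices C ∈ R^{r×(m−r)} and D ∈ R^{(n−r)×r} such that B = V⁻¹ · M · U⁻¹, where M is the n×m block matrix [[I_r, C], [D, D·C]]. -/
import Mathlib


open Matrix

/-- `I_{r,m,n}`: the `m × n` matrix with the first `r` diagonal entries equal to `1`
and all other entries `0`. -/
def stdRankMatrix (R : Type*) [CommRing R] (r m n : ℕ) : Matrix (Fin m) (Fin n) R :=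
  Matrix.of fun i j => if (i : ℕ) = (j : ℕ) ∧ (i : ℕ) < r then 1 else 0

theorem stmt5 {R : Type*} [CommRing R] {m n r : ℕ} (hrm : r ≤ m) (hrn : r ≤ n)
    (U : Matrix (Fin m) (Fin m) R) (V : Matrix (Fin n) (Fin n) R)
    (hU : IsUnit U.det) (hV : IsUnit V.det)
    (A : Matrix (Fin m) (Fin n) R) (hA : A = U * stdRankMatrix R r m n * V)
    (B : Matrix (Fin n) (Fin m) R) :
    (A * B * A = A ∧ B * A * B = B) ↔
      ∃ (C : Matrix (Fin r) (Fin (m - r)) R) (D : Matrix (Fin (n - r)) (Fin r) R),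
        B = V⁻¹ *
          (Matrix.fromBlocks (1 : Matrix (Fin r) (Fin r) R) C D (D * C)).submatrix
            (fun i : Fin n => finSumFinEquiv.symm (Fin.cast (by omega) i))
            (fun j : Fin m => finSumFinEquiv.symm (Fin.cast (by omega) j)) *
          U⁻¹ := by
  have hm : m = r + (m - r) := (Nat.add_sub_cancel' hrm).symm
  have hn : n = r + (n - r) := (Nat.add_sub_cancel' hrn).symm
  set E := stdRankMatrix R r m n with hEdef
  set em : Fin m ≃ Fin r ⊕ Fin (m - r) := (finCongr hm).trans finSumFinEquiv.symm with hem
  set en : Fin n ≃ Fin r ⊕ Fin (n - r) := (finCongr hn).trans finSumFinEquiv.symm with hen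
  have hvv : V⁻¹ * V = 1 := Matrix.nonsing_inv_mul V hV
  have hvv' : V * V⁻¹ = 1 := Matrix.mul_nonsing_inv V hV
  have huu : U⁻¹ * U = 1 := Matrix.nonsing_inv_mul U hU
  have huu' : U * U⁻¹ = 1 := Matrix.mul_nonsing_inv U hU
  have hvvX : ∀ {k : ℕ} (X : Matrix (Fin n) (Fin k) R), V * (V⁻¹ * X) = X := by
    intro k X; rw [← Matrix.mul_assoc, hvv', Matrix.one_mul]
  have huuX : ∀ {k : ℕ} (X : Matrix (Fin m) (Fin k) R), U⁻¹ * (U * X) = X := by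
    intro k X; rw [← Matrix.mul_assoc, huu, Matrix.one_mul]
  set B' := V * B * U with hB'
  have hBrec : B = V⁻¹ * B' * U⁻¹ := by
    have h : V⁻¹ * (V * B * U) * U⁻¹ = V⁻¹ * V * B * (U * U⁻¹) := by
      simp only [Matrix.mul_assoc]
    rw [hB', h, hvv, huu', Matrix.one_mul, Matrix.mul_one]
  -- cancellation
  have cancel : ∀ {k l : ℕ} (P Pi : Matrix (Fin k) (Fin k) R)
      (Q Qi : Matrix (Fin l) (Fin l) R), Pi * P = 1 → Q * Qi = 1 →
      ∀ X Y : Matrix (Fin k) (Fin l) R, (P * X * Q = P * Y * Q ↔ X = Y) := by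
    intro k l P Pi Q Qi hP hQ X Y
    constructor
    · intro h
      have h' := congrArg (fun Z => Pi * Z * Qi) h
      simp only [Matrix.mul_assoc] at h'
      rw [hQ] at h'
      simp only [Matrix.mul_one] at h'
      rwa [← Matrix.mul_assoc, ← Matrix.mul_assoc, hP, Matrix.one_mul, Matrix.one_mul] at h'
    · rintro rfl; rfl
  have key1 : A * B * A = A ↔ E * B' * E = E := by
    rw [hA, hBrec]
    rw [show U * E * V * (V⁻¹ * B' * U⁻¹) * (U * E * V) = U * (E * B' * E) * V by
      simp only [Matrix.mul_assoc, hvvX, huuX]]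
    exact cancel U U⁻¹ V V⁻¹ huu hvv' _ _
  have key2 : B * A * B = B ↔ B' * E * B' = B' := by
    rw [hA, hBrec]
    rw [show V⁻¹ * B' * U⁻¹ * (U * E * V) * (V⁻¹ * B' * U⁻¹) = V⁻¹ * (B' * E * B') * U⁻¹ by
      simp only [Matrix.mul_assoc, hvvX, huuX]]
    exact cancel V⁻¹ V U⁻¹ U hvv' huu _ _
  have key3 : ∀ M : Matrix (Fin n) (Fin m) R, (B = V⁻¹ * M * U⁻¹ ↔ B' = M) := by
    intro M
    rw [hBrec]
    exact cancel V⁻¹ V U⁻¹ U hvv' huu B' M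
  -- the block form of E
  have hEblock' : E.submatrix ⇑em.symm ⇑en.symm =
      Matrix.fromBlocks (1 : Matrix (Fin r) (Fin r) R) 0 0 0 := by
    ext i j
    rcases i with i | i <;> rcases j with j | j <;>
      simp [hEdef, stdRankMatrix, hem, hen, Matrix.one_apply, Fin.ext_iff] <;> omega
  have hEblock : E = (Matrix.fromBlocks (1 : Matrix (Fin r) (Fin r) R) 0 0 0).submatrix
      ⇑em ⇑en := by
    rw [← hEblock', Matrix.submatrix_submatrix, Equiv.symm_comp_self, Equiv.symm_comp_self,
      Matrix.submatrix_id_id]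
  have subinjnm : Function.Injective
      (fun M : Matrix (Fin r ⊕ Fin (n - r)) (Fin r ⊕ Fin (m - r)) R =>
        M.submatrix ⇑en ⇑em) := by
    intro X Y h
    have h2 := congrArg (fun M : Matrix (Fin n) (Fin m) R => M.submatrix ⇑en.symm ⇑em.symm) h
    simpa only [Matrix.submatrix_submatrix, Equiv.self_comp_symm,
      Matrix.submatrix_id_id] using h2
  have subinjmn : Function.Injective
      (fun M : Matrix (Fin r ⊕ Fin (m - r)) (Fin r ⊕ Fin (n - r)) R =>
        M.submatrix ⇑em ⇑en) := by
    intro X Y h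
    have h2 := congrArg (fun M : Matrix (Fin m) (Fin n) R => M.submatrix ⇑em.symm ⇑en.symm) h
    simpa only [Matrix.submatrix_submatrix, Equiv.self_comp_symm,
      Matrix.submatrix_id_id] using h2
  have henfun : (fun i : Fin n => finSumFinEquiv.symm (Fin.cast (by omega : n = r + (n - r)) i))
      = ⇑en := rfl
  have hemfun : (fun j : Fin m => finSumFinEquiv.symm (Fin.cast (by omega : m = r + (m - r)) j))
      = ⇑em := rfl
  rw [key1, key2]
  simp only [key3]
  constructor
  · rintro ⟨h1, h2⟩
    set X := B'.submatrix ⇑en.symm ⇑em.symm with hX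
    have hB'X : B' = X.submatrix ⇑en ⇑em := by
      rw [hX, Matrix.submatrix_submatrix, Equiv.symm_comp_self, Equiv.symm_comp_self,
        Matrix.submatrix_id_id]
    have hXblocks : X = Matrix.fromBlocks X.toBlocks₁₁ X.toBlocks₁₂ X.toBlocks₂₁ X.toBlocks₂₂ :=
      (Matrix.fromBlocks_toBlocks X).symm
    rw [hEblock, hB'X] at h1 h2
    rw [Matrix.submatrix_mul_equiv, Matrix.submatrix_mul_equiv] at h1 h2
    have h1' := subinjmn h1
    have h2' := subinjnm h2
    rw [hXblocks] at h1' h2'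
    simp only [Matrix.fromBlocks_multiply, Matrix.mul_zero, Matrix.zero_mul, Matrix.mul_one,
      Matrix.one_mul, zero_add, add_zero, Matrix.fromBlocks_inj] at h1' h2'
    obtain ⟨hP, -, -, -⟩ := h1'
    obtain ⟨-, -, -, hT⟩ := h2'
    refine ⟨X.toBlocks₁₂, X.toBlocks₂₁, ?_⟩
    rw [henfun, hemfun, hB'X, hT, ← hP, ← hXblocks]
  · rintro ⟨C, D, hBCD⟩
    rw [henfun, hemfun] at hBCD
    rw [hBCD, hEblock]
    constructor
    · rw [Matrix.submatrix_mul_equiv, Matrix.submatrix_mul_equiv]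
      congr 1
      simp [Matrix.fromBlocks_multiply]
    · rw [Matrix.submatrix_mul_equiv, Matrix.submatrix_mul_equiv]
      congr 1
      simp [Matrix.fromBlocks_multiply, Matrix.mul_assoc]
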